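/- Let V be a real vector space of finite dimension n ≥ 2 and let R be a Bianchi tensor on V with Ricci contraction r. Then R admits a unique decomposition R = W + [Q∧Id] where W is a Bianchi tensor whose Ricci contraction is zero and Q is a bilinear form on V; moreover Q = (1/(n−1))r₊ + (1/(n+1))r₋, where r₊ and r₋ are the symmetric and antisymmetric parts of r. -/
import Mathlib


open LinearMap Module

/-- For a bilinear form `Q` on `V`, `[Q∧Id]` is the bilinear map `V × V → End(V)` given by
`[Q∧Id](X,Y)Z = Q(X,Y)Z + Q(X,Z)Y − Q(Y,X)Z − Q(Y,Z)X`. -/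
noncomputable def QId {V : Type*} [AddCommGroup V] [Module ℝ V]
    (Q : V →ₗ[ℝ] V →ₗ[ℝ] ℝ) : V →ₗ[ℝ] V →ₗ[ℝ] Module.End ℝ V :=
  LinearMap.mk₂ ℝ
    (fun X Y => Q X Y • (LinearMap.id : Module.End ℝ V)
      + LinearMap.smulRight (Q X) Y
      - Q Y X • (LinearMap.id : Module.End ℝ V)
      - LinearMap.smulRight (Q Y) X)
    (by intro m₁ m₂ n; ext Z; simp [add_smul, smul_smul]; module)
    (by intro c m n; ext Z; simp [smul_smul]; module)
    (by intro m n₁ n₂; ext Z; simp [add_smul, smul_smul]; module)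
    (by intro c m n; ext Z; simp [smul_smul]; module)

/-- The Ricci contraction of a curvature-type tensor `R : V × V → End(V)` is the bilinear
form `r(X,Y) = Tr(Z ↦ R(X,Z)Y)`. -/
noncomputable def ricci {V : Type*} [AddCommGroup V] [Module ℝ V]
    (R : V →ₗ[ℝ] V →ₗ[ℝ] Module.End ℝ V) (X Y : V) : ℝ :=
  LinearMap.trace ℝ V ((LinearMap.applyₗ Y).comp (R X))

section Aux

variable {V : Type*} [AddCommGroup V] [Module ℝ V] [FiniteDimensional ℝ V]

lemma trace_smulRight' (f : V →ₗ[ℝ] ℝ) (v : V) :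
    LinearMap.trace ℝ V (LinearMap.smulRight f v) = f v := by
  have h : LinearMap.smulRight f v = dualTensorHom ℝ V V (f ⊗ₜ v) := by
    ext x; simp
  rw [h, ← LinearMap.comp_apply, LinearMap.trace_eq_contract, contractLeft_apply]

lemma ricci_add (R S : V →ₗ[ℝ] V →ₗ[ℝ] Module.End ℝ V) (X Y : V) :
    ricci (R + S) X Y = ricci R X Y + ricci S X Y := by
  simp [ricci, LinearMap.comp_add]

lemma QId_apply (Q : V →ₗ[ℝ] V →ₗ[ℝ] ℝ) (X Y Z : V) :
    QId Q X Y Z = Q X Y • Z + Q X Z • Y - Q Y X • Z - Q Y Z • X := by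
  simp [QId]

lemma ricci_QId (Q : V →ₗ[ℝ] V →ₗ[ℝ] ℝ) (X Y : V) :
    ricci (QId Q) X Y = (finrank ℝ V : ℝ) * Q X Y - Q Y X := by
  have h : (LinearMap.applyₗ Y).comp ((QId Q) X)
      = Q X Y • (LinearMap.id : Module.End ℝ V)
        + LinearMap.smulRight (Q X) Y
        - LinearMap.smulRight (Q.flip X) Y - LinearMap.smulRight (Q.flip Y) X := by
    ext Z
    simp [QId_apply]
    abel
  rw [ricci, h]
  simp only [map_sub, map_add, map_smul, LinearMap.trace_id, trace_smulRight',
    LinearMap.flip_apply]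
  simp only [smul_eq_mul]
  ring

lemma QId_alt (Q : V →ₗ[ℝ] V →ₗ[ℝ] ℝ) (X : V) : QId Q X X = 0 := by
  ext Z; simp [QId_apply]

lemma QId_bianchi (Q : V →ₗ[ℝ] V →ₗ[ℝ] ℝ) (X Y Z : V) :
    QId Q X Y Z + QId Q Y Z X + QId Q Z X Y = 0 := by
  simp [QId_apply]; abel

end Aux

/-- Any Bianchi tensor `R` on a space of dimension `n ≥ 2` decomposes uniquely as
`R = W + [Q∧Id]` with `W` a Bianchi tensor of vanishing Ricci contraction and `Q` a
bilinear form; necessarily `Q = (1/(n−1))r₊ + (1/(n+1))r₋` where `r` is the Ricci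
contraction of `R`. -/
theorem bianchi_weyl_decomposition {V : Type*} [AddCommGroup V] [Module ℝ V]
    [FiniteDimensional ℝ V]
    (n : ℕ) (hn : n = Module.finrank ℝ V) (hn2 : 2 ≤ n)
    (R : V →ₗ[ℝ] V →ₗ[ℝ] Module.End ℝ V)
    (halt : ∀ X : V, R X X = 0)
    (hbianchi : ∀ X Y Z : V, R X Y Z + R Y Z X + R Z X Y = 0) :
    (∃! WQ : (V →ₗ[ℝ] V →ₗ[ℝ] Module.End ℝ V) × (V →ₗ[ℝ] V →ₗ[ℝ] ℝ),
        (∀ X : V, WQ.1 X X = 0) ∧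
        (∀ X Y Z : V, WQ.1 X Y Z + WQ.1 Y Z X + WQ.1 Z X Y = 0) ∧
        (∀ X Y : V, ricci WQ.1 X Y = 0) ∧
        R = WQ.1 + QId WQ.2) ∧
    (∀ (W : V →ₗ[ℝ] V →ₗ[ℝ] Module.End ℝ V) (Q : V →ₗ[ℝ] V →ₗ[ℝ] ℝ),
        (∀ X : V, W X X = 0) →
        (∀ X Y Z : V, W X Y Z + W Y Z X + W Z X Y = 0) →
        (∀ X Y : V, ricci W X Y = 0) →
        R = W + QId Q →
        ∀ X Y : V, Q X Y =
          (1 / ((n : ℝ) - 1)) * ((ricci R X Y + ricci R Y X) / 2) +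
          (1 / ((n : ℝ) + 1)) * ((ricci R X Y - ricci R Y X) / 2)) := by
  have h2 : (2 : ℝ) ≤ (n : ℝ) := by exact_mod_cast hn2
  have hm1 : (n : ℝ) - 1 ≠ 0 := by intro h; linarith
  have hp1 : (n : ℝ) + 1 ≠ 0 := by intro h; linarith
  -- the Ricci contraction of R, as a bilinear map
  set rB : V →ₗ[ℝ] V →ₗ[ℝ] ℝ := LinearMap.mk₂ ℝ (fun X Y => ricci R X Y)
    (by intro m₁ m₂ n; simp [ricci, LinearMap.comp_add])
    (by intro c m n; simp [ricci, LinearMap.comp_smul])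
    (by intro m n₁ n₂; simp [ricci, LinearMap.add_comp])
    (by intro c m n; simp [ricci, LinearMap.smul_comp]) with hrB
  have hrBa : ∀ X Y : V, rB X Y = ricci R X Y := fun _ _ => rfl
  set a : ℝ := 1 / ((n : ℝ) - 1) with ha
  set b : ℝ := 1 / ((n : ℝ) + 1) with hb
  set Q₀ : V →ₗ[ℝ] V →ₗ[ℝ] ℝ := ((a + b) / 2) • rB + ((a - b) / 2) • rB.flip with hQ₀
  have hQ₀a : ∀ X Y : V, Q₀ X Y
      = ((a + b) / 2) * ricci R X Y + ((a - b) / 2) * ricci R Y X := by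
    intro X Y
    simp [hQ₀, hrBa]
  have hQform : ∀ X Y : V, Q₀ X Y =
      a * ((ricci R X Y + ricci R Y X) / 2) + b * ((ricci R X Y - ricci R Y X) / 2) := by
    intro X Y; rw [hQ₀a]; ring
  set W₀ : V →ₗ[ℝ] V →ₗ[ℝ] Module.End ℝ V := R - QId Q₀ with hW₀
  have hRW : R = W₀ + QId Q₀ := by rw [hW₀]; abel
  have hfin : (finrank ℝ V : ℝ) = (n : ℝ) := by exact_mod_cast hn.symm
  -- key uniqueness computation
  have key : ∀ (W : V →ₗ[ℝ] V →ₗ[ℝ] Module.End ℝ V) (Q : V →ₗ[ℝ] V →ₗ[ℝ] ℝ),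
      (∀ X Y : V, ricci W X Y = 0) → R = W + QId Q →
      ∀ X Y : V, Q X Y =
        a * ((ricci R X Y + ricci R Y X) / 2) + b * ((ricci R X Y - ricci R Y X) / 2) := by
    intro W Q hW3 hR X Y
    have hr : ∀ X Y : V, ricci R X Y = (n : ℝ) * Q X Y - Q Y X := by
      intro X Y
      rw [hR, ricci_add, hW3, ricci_QId, hfin, zero_add]
    rw [hr X Y, hr Y X, ha, hb]
    field_simp
    ring
  constructor
  · refine ⟨(W₀, Q₀), ⟨?_, ?_, ?_, hRW⟩, ?_⟩
    · intro X
      simp only [hW₀, LinearMap.sub_apply]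
      rw [halt, QId_alt, sub_zero]
    · intro X Y Z
      simp only [hW₀, LinearMap.sub_apply]
      have h1 := hbianchi X Y Z
      have h2 := QId_bianchi Q₀ X Y Z
      have h3 : R X Y Z - QId Q₀ X Y Z + (R Y Z X - QId Q₀ Y Z X) + (R Z X Y - QId Q₀ Z X Y)
          = (R X Y Z + R Y Z X + R Z X Y)
            - (QId Q₀ X Y Z + QId Q₀ Y Z X + QId Q₀ Z X Y) := by abel
      rw [h3, h1, h2, sub_zero]
    · intro X Y
      have : ricci R X Y = ricci W₀ X Y + ricci (QId Q₀) X Y := by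
        rw [← ricci_add, ← hRW]
      rw [ricci_QId, hfin, hQ₀a, hQ₀a] at this
      have hz : ricci W₀ X Y = ricci R X Y
          - ((n : ℝ) * (((a + b) / 2) * ricci R X Y + ((a - b) / 2) * ricci R Y X)
            - (((a + b) / 2) * ricci R Y X + ((a - b) / 2) * ricci R X Y)) := by
        linarith
      rw [hz, ha, hb]
      field_simp
      ring
    · rintro ⟨W, Q⟩ ⟨h1, h2', h3, h4⟩
      have hQ : Q = Q₀ := by
        ext X Y
        rw [key W Q h3 h4 X Y, hQform]
      have hW : W = W₀ := by
        rw [hW₀, ← hQ, h4]; abel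
      simp [hW, hQ]
  · intro W Q h1 h2' h3 h4 X Y
    rw [key W Q h3 h4 X Y, ha, hb]
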